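/- In the polynomial ring ℂ[θ_1,θ_2,θ_3,ω], let χ_1,…,χ_8 be the eight linear forms ±θ_1±θ_2±θ_3 (all sign combinations). Writing σ_i for the elementary symmetric polynomials σ_i(θ_1,θ_2,θ_3), one has the identity σ_2(χ•) ω⁶ + σ_5(χ•) ω³ + σ_6(χ•) ω² + σ_8(χ•) = −4σ_1⁶(2σ_2+ω²) + 8σ_2σ_1⁴(2σ_2+3ω²) − 32σ_3σ_1³(2σ_2+ω²) + 64σ_2σ_3σ_1ω² − 4σ_1²(8σ_2²ω² − 16σ_3² + ω⁶) + 8ω²(σ_2ω⁴ − 8σ_3²) + σ_1⁸ + 16σ_3σ_1⁵. (This is the generator Q̃^S_{−,3} of the kernel ideal for the three-qubit case r = 3.) -/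

import Mathlib

open MvPolynomial

/-- `θ_1` in `ℂ[θ_1,θ_2,θ_3,ω]`. -/
noncomputable def θ₁ : MvPolynomial (Fin 4) ℂ := X 0
/-- `θ_2` in `ℂ[θ_1,θ_2,θ_3,ω]`. -/
noncomputable def θ₂ : MvPolynomial (Fin 4) ℂ := X 1
/-- `θ_3` in `ℂ[θ_1,θ_2,θ_3,ω]`. -/
noncomputable def θ₃ : MvPolynomial (Fin 4) ℂ := X 2
/-- `ω` in `ℂ[θ_1,θ_2,θ_3,ω]`. -/
noncomputable def w : MvPolynomial (Fin 4) ℂ := X 3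

/-- The multiset of the eight linear forms `±θ_1 ± θ_2 ± θ_3` (all sign combinations),
the additive characters of the `T³`-action on `ℙ_7`. -/
noncomputable def χs : Multiset (MvPolynomial (Fin 4) ℂ) :=
  {θ₁ + θ₂ + θ₃, θ₁ + θ₂ - θ₃, θ₁ - θ₂ + θ₃, -θ₁ + θ₂ + θ₃,
   θ₁ - θ₂ - θ₃, -θ₁ + θ₂ - θ₃, -θ₁ - θ₂ + θ₃, -θ₁ - θ₂ - θ₃}

/-- `σ_1(θ) = θ_1 + θ_2 + θ_3`. -/
noncomputable def s₁ : MvPolynomial (Fin 4) ℂ := θ₁ + θ₂ + θ₃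
/-- `σ_2(θ) = θ_1θ_2 + θ_1θ_3 + θ_2θ_3`. -/
noncomputable def s₂ : MvPolynomial (Fin 4) ℂ := θ₁ * θ₂ + θ₁ * θ₃ + θ₂ * θ₃
/-- `σ_3(θ) = θ_1θ_2θ_3`. -/
noncomputable def s₃ : MvPolynomial (Fin 4) ℂ := θ₁ * θ₂ * θ₃

/-!
The characters come in opposite pairs `±χ`, so `∏ (t + χᵢ) = ∏ (t² - χᵢ²)` over the four
pairs: the odd `σ_k(χ•)` vanish and `σ_{2k}(χ•) = (-1)ᵏ eₖ` of the four squares `χᵢ²`,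
which are then expanded in `σ_1, σ_2, σ_3`.
-/

namespace Multiset

section CommSemiring

variable {R : Type*} [CommSemiring R]

@[simp]
lemma esymm_zero_right (s : Multiset R) : s.esymm 0 = 1 := by
  simp [esymm]

@[simp]
lemma esymm_zero_succ (n : ℕ) : (0 : Multiset R).esymm (n + 1) = 0 := by
  simp [esymm, powersetCard_zero_right]

lemma esymm_cons_succ (a : R) (s : Multiset R) (n : ℕ) :
    (a ::ₘ s).esymm (n + 1) = a * s.esymm n + s.esymm (n + 1) := by
  simp [esymm, powersetCard_cons, map_map, sum_map_mul_left, add_comm]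

end CommSemiring

variable {R : Type*} [CommRing R]

lemma esymm_cons_cons_neg (a : R) (s : Multiset R) (n : ℕ) :
    (a ::ₘ -a ::ₘ s).esymm (n + 2) = s.esymm (n + 2) - a ^ 2 * s.esymm n := by
  simp only [esymm_cons_succ]
  ring

lemma cons_add_map_neg (a : R) (s : Multiset R) :
    a ::ₘ s + (a ::ₘ s).map Neg.neg = a ::ₘ -a ::ₘ (s + s.map Neg.neg) := by
  simp [cons_add, add_cons, cons_swap]

lemma esymm_add_map_neg_odd (s : Multiset R) (k : ℕ) :
    (s + s.map Neg.neg).esymm (2 * k + 1) = 0 := by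
  induction s using Multiset.induction_on generalizing k with
  | empty => simp
  | cons a s ih =>
    rw [cons_add_map_neg]
    cases k with
    | zero => simpa [esymm_cons_succ] using ih 0
    | succ k =>
      have h := ih (k + 1)
      rw [show 2 * (k + 1) + 1 = 2 * k + 1 + 2 by ring] at h ⊢
      rw [esymm_cons_cons_neg, h, ih k, mul_zero, sub_zero]

lemma esymm_add_map_neg_even (s : Multiset R) (k : ℕ) :
    (s + s.map Neg.neg).esymm (2 * k) = (-1) ^ k * (s.map (· ^ 2)).esymm k := by
  induction s using Multiset.induction_on generalizing k with
  | empty =>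
    cases k with
    | zero => simp
    | succ k =>
      simp only [map_zero, add_zero, esymm_zero_succ, mul_zero]
      exact esymm_zero_succ (2 * k + 1)
  | cons a s ih =>
    rw [cons_add_map_neg]
    cases k with
    | zero => simp
    | succ k =>
      rw [show 2 * (k + 1) = 2 * k + 2 by ring, esymm_cons_cons_neg, map_cons, esymm_cons_succ,
        show 2 * k + 2 = 2 * (k + 1) by ring, ih, ih]
      ring

end Multiset

open Multiset

lemma χs_eq_add_map_neg :
    χs = {θ₁ + θ₂ + θ₃, θ₁ + θ₂ - θ₃, θ₁ - θ₂ + θ₃, -θ₁ + θ₂ + θ₃} +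
      ({θ₁ + θ₂ + θ₃, θ₁ + θ₂ - θ₃, θ₁ - θ₂ + θ₃, -θ₁ + θ₂ + θ₃} : Multiset _).map Neg.neg := by
  have h₅ : θ₁ - θ₂ - θ₃ = -(-θ₁ + θ₂ + θ₃) := by ring
  have h₆ : -θ₁ + θ₂ - θ₃ = -(θ₁ - θ₂ + θ₃) := by ring
  have h₇ : -θ₁ - θ₂ + θ₃ = -(θ₁ + θ₂ - θ₃) := by ring
  have h₈ : -θ₁ - θ₂ - θ₃ = -(θ₁ + θ₂ + θ₃) := by ring
  rw [χs, h₅, h₆, h₇, h₈]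
  simp only [insert_eq_cons, ← cons_zero, map_cons, map_zero, cons_add, zero_add, cons_swap]

lemma χs_esymm_two : χs.esymm 2 = -4 * s₁ ^ 2 + 8 * s₂ := by
  rw [χs_eq_add_map_neg]
  refine (esymm_add_map_neg_even _ 1).trans ?_
  simp only [insert_eq_cons, ← cons_zero, map_cons, map_zero, esymm_cons_succ,
    esymm_zero_right, esymm_zero_succ, s₁, s₂]
  ring

lemma χs_esymm_five : χs.esymm 5 = 0 := by
  rw [χs_eq_add_map_neg]
  exact esymm_add_map_neg_odd _ 2

lemma χs_esymm_six : χs.esymm 6 = -4 * s₁ ^ 6 + 24 * s₁ ^ 4 * s₂ - 32 * s₁ ^ 3 * s₃ -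
    32 * s₁ ^ 2 * s₂ ^ 2 + 64 * s₁ * s₂ * s₃ - 64 * s₃ ^ 2 := by
  rw [χs_eq_add_map_neg]
  refine (esymm_add_map_neg_even _ 3).trans ?_
  simp only [insert_eq_cons, ← cons_zero, map_cons, map_zero, esymm_cons_succ,
    esymm_zero_right, esymm_zero_succ, s₁, s₂, s₃]
  ring

lemma χs_esymm_eight : χs.esymm 8 = s₁ ^ 8 - 8 * s₁ ^ 6 * s₂ + 16 * s₁ ^ 5 * s₃ +
    16 * s₁ ^ 4 * s₂ ^ 2 - 64 * s₁ ^ 3 * s₂ * s₃ + 64 * s₁ ^ 2 * s₃ ^ 2 := by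
  rw [χs_eq_add_map_neg]
  refine (esymm_add_map_neg_even _ 4).trans ?_
  simp only [insert_eq_cons, ← cons_zero, map_cons, map_zero, esymm_cons_succ,
    esymm_zero_right, esymm_zero_succ, s₁, s₂, s₃]
  ring

/-- Three-qubit kernel generator `Q̃^S_{-,3}`:
`σ_2(χ•) ω⁶ + σ_5(χ•) ω³ + σ_6(χ•) ω² + σ_8(χ•)
  = -4σ_1⁶(2σ_2+ω²) + 8σ_2σ_1⁴(2σ_2+3ω²) - 32σ_3σ_1³(2σ_2+ω²) + 64σ_2σ_3σ_1ω²
    - 4σ_1²(8σ_2²ω² - 16σ_3² + ω⁶) + 8ω²(σ_2ω⁴ - 8σ_3²) + σ_1⁸ + 16σ_3σ_1⁵`. -/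
theorem three_qubit_kernel_generator_minus_three :
    χs.esymm 2 * w ^ 6 + χs.esymm 5 * w ^ 3 + χs.esymm 6 * w ^ 2 + χs.esymm 8 =
      -4 * s₁ ^ 6 * (2 * s₂ + w ^ 2) + 8 * s₂ * s₁ ^ 4 * (2 * s₂ + 3 * w ^ 2) -
        32 * s₃ * s₁ ^ 3 * (2 * s₂ + w ^ 2) + 64 * s₂ * s₃ * s₁ * w ^ 2 -
        4 * s₁ ^ 2 * (8 * s₂ ^ 2 * w ^ 2 - 16 * s₃ ^ 2 + w ^ 6) +
        8 * w ^ 2 * (s₂ * w ^ 4 - 8 * s₃ ^ 2) +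
        s₁ ^ 8 + 16 * s₃ * s₁ ^ 5 := by
  rw [χs_esymm_two, χs_esymm_five, χs_esymm_six, χs_esymm_eight]
  ring
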